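/- arXiv:2106.15201 — 2 statements merged into one kernel-verified Lean document; each statement's English description precedes it below -/
import Mathlib

section
/- For every tensor X ∈ ℝ^{n_1×⋯×n_d} and every integer s with 0 ≤ s ≤ ∑_{J∈K} n_J, it holds that g_s(X) = 0 if and only if ∑_{J∈K} rank(X^{[J]}) < s. In particular g_s(X) = 0 implies g_{s+1}(X) = 0. -/
open scoped BigOperators
open Matrix

noncomputable section

abbrev TIdx (d : ℕ) (n : Fin d → ℕ) : Type := ∀ μ : Fin d, Fin (n μ)
abbrev Tensor (d : ℕ) (n : Fin d → ℕ) : Type := EuclideanSpace ℝ (TIdx d n)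

def nS {d : ℕ} (n : Fin d → ℕ) (S : Finset (Fin d)) : ℕ := ∏ μ ∈ S, n μ

def mat {d : ℕ} (n : Fin d → ℕ) (X : Tensor d n) (J : Finset (Fin d)) :
    Matrix (∀ μ : {μ : Fin d // μ ∈ J}, Fin (n μ.1))
      (∀ μ : {μ : Fin d // μ ∉ J}, Fin (n μ.1)) ℝ :=
  Matrix.of fun a b => X fun μ => if h : μ ∈ J then a ⟨μ, h⟩ else b ⟨μ, h⟩

def svalsSq {m k : Type*} [Fintype m] [Fintype k] [DecidableEq m]
    (A : Matrix m k ℝ) : ℕ → ℝ := fun i =>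
  ((((Finset.univ.val.map
        (Matrix.isHermitian_mul_conjTranspose_self A).eigenvalues).sort (· ≤ ·)).reverse).getD i 0)

def svals {m k : Type*} [Fintype m] [Fintype k] [DecidableEq m]
    (A : Matrix m k ℝ) : ℕ → ℝ := fun i => Real.sqrt (svalsSq A i)

def minorDet {m k : Type*} [DecidableEq m] [DecidableEq k]
    (A : Matrix m k ℝ) (s : ℕ) (I : Finset m) (J : Finset k) : ℝ :=
  if hI : I.card = s then
    if hJ : J.card = s then
      Matrix.det (Matrix.of fun a b : Fin s =>
        A ((I.equivFinOfCardEq hI).symm a).1 ((J.equivFinOfCardEq hJ).symm b).1)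
    else 0
  else 0

def detSq {m k : Type*} [Fintype m] [Fintype k] [DecidableEq m] [DecidableEq k]
    (A : Matrix m k ℝ) (s : ℕ) : ℝ :=
  ∑ I ∈ Finset.powersetCard s (Finset.univ : Finset m),
    ∑ J ∈ Finset.powersetCard s (Finset.univ : Finset k), (minorDet A s I J) ^ 2

def fK {d : ℕ} (n : Fin d → ℕ) (𝒥 : Finset (Finset (Fin d))) (γ : ℝ) (X : Tensor d n) : ℝ :=
  Real.log (∏ J ∈ 𝒥, (mat n X J * (mat n X J)ᴴ + γ • 1).det)

def wmat {d : ℕ} (n : Fin d → ℕ) (γ : ℝ) (Xw : Tensor d n) (J : Finset (Fin d)) :=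
  (mat n Xw J * (mat n Xw J)ᴴ + γ • (1 : Matrix _ _ ℝ))⁻¹

def Q {d : ℕ} (n : Fin d → ℕ) (𝒥 : Finset (Finset (Fin d))) (γ : ℝ) (Xw X' : Tensor d n) : ℝ :=
  ∑ J ∈ 𝒥, ((mat n X' J)ᴴ * wmat n γ Xw J * mat n X' J).trace

def KS {d : ℕ} (K S : Finset (Finset (Fin d))) : Finset (Finset (Fin d)) :=
  (K \ S) ∪ S.image (·ᶜ)

def unmat {d : ℕ} (n : Fin d → ℕ) (J : Finset (Fin d))
    (A : Matrix (∀ μ : {μ : Fin d // μ ∈ J}, Fin (n μ.1))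
      (∀ μ : {μ : Fin d // μ ∉ J}, Fin (n μ.1)) ℝ) : Tensor d n :=
  WithLp.toLp 2 (fun idx => A (fun μ => idx μ.1) (fun μ => idx μ.1))

def Wop {d : ℕ} (n : Fin d → ℕ) (K : Finset (Finset (Fin d))) (γ : ℝ)
    (Xw X' : Tensor d n) : Tensor d n :=
  ∑ J ∈ K, unmat n J (wmat n γ Xw J * mat n X' J)


/-- `g_s(X) := ∑_{{k^J} ∈ Ξ_s} ∏_{J∈K} det²_{k^J}(X^{[J]})`, where
`Ξ_s = { {k^J}_{J∈K} : 0 ≤ k^J ≤ n_J, ∑_J k^J = s }`. -/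
def gfun {d : ℕ} (n : Fin d → ℕ) (K : Finset (Finset (Fin d))) (s : ℕ)
    (X : Tensor d n) : ℝ :=
  ∑ f ∈ Finset.univ.filter
      (fun f : (∀ J : K, Fin (nS n (J : Finset (Fin d)) + 1)) =>
        (∑ J : K, ((f J : ℕ))) = s),
    ∏ J : K, detSq (mat n X (J : Finset (Fin d))) (f J)


namespace GAux


variable {m k l l' : Type*} [Fintype m] [Fintype k] [Fintype l] [Fintype l']

lemma rank_submatrix_row_le (A : Matrix m k ℝ) (f : l → m) :
    (A.submatrix f id).rank ≤ A.rank := by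
  rw [Matrix.rank_eq_finrank_span_row, Matrix.rank_eq_finrank_span_row]
  apply Submodule.finrank_mono
  apply Submodule.span_mono
  rintro x ⟨i, rfl⟩
  exact ⟨f i, rfl⟩

lemma rank_submatrix_col_le (A : Matrix m k ℝ) (g : l → k) :
    (A.submatrix id g).rank ≤ A.rank := by
  rw [Matrix.rank_eq_finrank_span_cols, Matrix.rank_eq_finrank_span_cols]
  apply Submodule.finrank_mono
  apply Submodule.span_mono
  rintro x ⟨j, rfl⟩
  exact ⟨g j, rfl⟩

lemma rank_submatrix_le'' (A : Matrix m k ℝ) (f : l → m) (g : l' → k) :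
    (A.submatrix f g).rank ≤ A.rank := by
  have h1 : A.submatrix f g = (A.submatrix id g).submatrix f id := rfl
  rw [h1]
  exact (rank_submatrix_row_le _ f).trans (rank_submatrix_col_le A g)

lemma exists_cols (A : Matrix m k ℝ) (t : ℕ) (h : t ≤ A.rank) :
    ∃ g : Fin t → k, Function.Injective g ∧
      LinearIndependent ℝ (fun j => Aᵀ (g j)) := by
  obtain ⟨b, hbsub, hbspan, hbind⟩ := exists_linearIndependent ℝ (Set.range Aᵀ)
  have hfin : b.Finite := (Set.finite_range Aᵀ).subset hbsub
  haveI := hfin.fintype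
  have hcard : t ≤ Fintype.card b := by
    have h1 : Module.finrank ℝ (Submodule.span ℝ b) = b.toFinset.card :=
      finrank_span_set_eq_card hbind
    have h2 : A.rank = Module.finrank ℝ (Submodule.span ℝ (Set.range Aᵀ)) :=
      Matrix.rank_eq_finrank_span_cols A
    rw [Set.toFinset_card, hbspan, ← h2] at h1
    omega
  obtain ⟨e⟩ : Nonempty (Fin t ↪ b) :=
    Function.Embedding.nonempty_of_card_le (by simpa using hcard)
  have hch : ∀ x : b, ∃ c : k, Aᵀ c = (x : m → ℝ) := fun x => hbsub x.2
  choose c hc using hch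
  refine ⟨fun j => c (e j), ?_, ?_⟩
  · intro j1 j2 hj
    have : ((e j1 : b) : m → ℝ) = ((e j2 : b) : m → ℝ) := by
      rw [← hc, ← hc]; exact congrArg Aᵀ hj
    exact e.injective (Subtype.ext this)
  · have : (fun j => Aᵀ (c (e j))) = (fun x : b => (x : m → ℝ)) ∘ e := by
      funext j; simp [hc]
    rw [this]
    exact hbind.comp e e.injective


lemma exists_minor (A : Matrix m k ℝ) (t : ℕ) (h : t ≤ A.rank) :
    ∃ (f : Fin t → m) (g : Fin t → k), Function.Injective f ∧ Function.Injective g ∧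
      (A.submatrix f g).det ≠ 0 := by
  obtain ⟨g, hg, hgind⟩ := exists_cols A t h
  set B := A.submatrix id g with hB
  have hBrows : LinearIndependent ℝ (fun j => Bᵀ j) := by
    have : (fun j => Bᵀ j) = (fun j => Aᵀ (g j)) := by funext j; rfl
    rw [this]; exact hgind
  have hBt : Bᵀ.rank = t := by
    have := hBrows.rank_matrix
    exact this.trans (by simp)
  obtain ⟨f, hf, hfind⟩ := exists_cols Bᵀ t (le_of_eq hBt.symm)
  have hrows : LinearIndependent ℝ (fun i => (B.submatrix f id) i) := by
    have : (fun i => (B.submatrix f id) i) = (fun i => Bᵀᵀ (f i)) := by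
      funext i; rfl
    rw [this]
    exact hfind
  have hunit : IsUnit (B.submatrix f id) :=
    Matrix.linearIndependent_rows_iff_isUnit.mp hrows
  refine ⟨f, g, hf, hg, ?_⟩
  have : B.submatrix f id = A.submatrix f g := rfl
  rw [← this]
  have := hunit.map (Matrix.detMonoidHom (n := Fin t) (R := ℝ))
  simpa using this.ne_zero


lemma detSq_nonneg [DecidableEq m] [DecidableEq k] (A : Matrix m k ℝ) (t : ℕ) : 0 ≤ detSq A t :=
  Finset.sum_nonneg fun _ _ => Finset.sum_nonneg fun _ _ => sq_nonneg _

lemma rank_ge_of_detSq_ne_zero [DecidableEq m] [DecidableEq k] {A : Matrix m k ℝ} {t : ℕ} (h : detSq A t ≠ 0) :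
    t ≤ A.rank := by
  rw [detSq] at h
  obtain ⟨I, _, hI⟩ := Finset.exists_ne_zero_of_sum_ne_zero h
  obtain ⟨J, _, hJ⟩ := Finset.exists_ne_zero_of_sum_ne_zero hI
  have hmd : minorDet A t I J ≠ 0 := fun h0 => hJ (by rw [h0]; ring)
  rw [minorDet] at hmd
  split_ifs at hmd with h1 h2
  · have hdet := hmd
    set f : Fin t → m := fun a => ((I.equivFinOfCardEq h1).symm a : m) with hf
    set g : Fin t → k := fun b => ((J.equivFinOfCardEq h2).symm b : k) with hg
    have : (A.submatrix f g).det ≠ 0 := hdet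
    have hunit : IsUnit (A.submatrix f g) :=
      (Matrix.isUnit_iff_isUnit_det _).mpr (isUnit_iff_ne_zero.mpr this)
    have hrk : (A.submatrix f g).rank = t := by
      rw [Matrix.rank_of_isUnit _ hunit, Fintype.card_fin]
    calc t = (A.submatrix f g).rank := hrk.symm
      _ ≤ A.rank := rank_submatrix_le'' A f g
  · exact absurd rfl hmd
  · exact absurd rfl hmd

lemma detSq_pos [DecidableEq m] [DecidableEq k] {A : Matrix m k ℝ} {t : ℕ} (h : t ≤ A.rank) : 0 < detSq A t := by
  obtain ⟨f, g, hf, hg, hdet⟩ := exists_minor A t h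
  set I : Finset m := Finset.univ.map ⟨f, hf⟩ with hIdef
  set J : Finset k := Finset.univ.map ⟨g, hg⟩ with hJdef
  have hI : I.card = t := by simp [hIdef]
  have hJ : J.card = t := by simp [hJdef]
  have hmemf : ∀ a : Fin t, f a ∈ I := by intro a; simp [hIdef]
  have hmemg : ∀ b : Fin t, g b ∈ J := by intro b; simp [hJdef]
  set f' : Fin t → m := fun a => ((I.equivFinOfCardEq hI).symm a : m) with hf'
  set g' : Fin t → k := fun b => ((J.equivFinOfCardEq hJ).symm b : k) with hg'
  -- permutations relating f to f' and g to g'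
  have hσinj : Function.Injective (fun a => I.equivFinOfCardEq hI ⟨f a, hmemf a⟩) := by
    intro a1 a2 h12
    have := (I.equivFinOfCardEq hI).injective h12
    exact hf (congrArg Subtype.val this)
  have hτinj : Function.Injective (fun b => J.equivFinOfCardEq hJ ⟨g b, hmemg b⟩) := by
    intro b1 b2 h12
    have := (J.equivFinOfCardEq hJ).injective h12
    exact hg (congrArg Subtype.val this)
  set σ : Equiv.Perm (Fin t) :=
    Equiv.ofBijective _ ((Finite.injective_iff_bijective).mp hσinj) with hσ
  set τ : Equiv.Perm (Fin t) :=
    Equiv.ofBijective _ ((Finite.injective_iff_bijective).mp hτinj) with hτ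
  have hfeq : ∀ a, f' (σ a) = f a := by
    intro a
    show ((I.equivFinOfCardEq hI).symm (I.equivFinOfCardEq hI ⟨f a, hmemf a⟩) : m) = f a
    rw [Equiv.symm_apply_apply]
  have hgeq : ∀ b, g' (τ b) = g b := by
    intro b
    show ((J.equivFinOfCardEq hJ).symm (J.equivFinOfCardEq hJ ⟨g b, hmemg b⟩) : k) = g b
    rw [Equiv.symm_apply_apply]
  have hsub : A.submatrix f g = ((A.submatrix f' g').submatrix id ⇑τ).submatrix ⇑σ id := by
    ext a b
    simp [Matrix.submatrix_apply, hfeq, hgeq]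
  have hdet' : (A.submatrix f' g').det ≠ 0 := by
    intro h0
    apply hdet
    rw [hsub, Matrix.det_permute, Matrix.det_permute', h0]
    ring
  have hmd : minorDet A t I J ≠ 0 := by
    rw [minorDet, dif_pos hI, dif_pos hJ]
    exact hdet'
  have hterm : 0 < minorDet A t I J ^ 2 :=
    lt_of_le_of_ne (sq_nonneg _) (Ne.symm (pow_ne_zero 2 hmd))
  rw [detSq]
  apply Finset.sum_pos'
  · intro I' _; exact Finset.sum_nonneg fun _ _ => sq_nonneg _
  · refine ⟨I, Finset.mem_powersetCard_univ.mpr hI, ?_⟩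
    apply Finset.sum_pos'
    · intro _ _; exact sq_nonneg _
    · exact ⟨J, Finset.mem_powersetCard_univ.mpr hJ, hterm⟩

lemma detSq_eq_zero_of_rank_lt [DecidableEq m] [DecidableEq k] {A : Matrix m k ℝ} {t : ℕ} (h : A.rank < t) :
    detSq A t = 0 := by
  by_contra hc
  exact absurd (rank_ge_of_detSq_ne_zero hc) (by omega)

lemma exists_sum_eq {ι : Type*} [Fintype ι] [DecidableEq ι] (r : ι → ℕ) (s : ℕ)
    (h : s ≤ ∑ i, r i) : ∃ kk : ι → ℕ, (∀ i, kk i ≤ r i) ∧ ∑ i, kk i = s := by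
  induction s with
  | zero => exact ⟨fun _ => 0, fun _ => Nat.zero_le _, by simp⟩
  | succ s ih =>
    obtain ⟨kk, hle, hsum⟩ := ih (Nat.le_of_succ_le h)
    have hex : ∃ i, kk i < r i := by
      by_contra hc
      push_neg at hc
      have : ∑ i, r i ≤ ∑ i, kk i := Finset.sum_le_sum fun i _ => hc i
      omega
    obtain ⟨i, hi⟩ := hex
    refine ⟨Function.update kk i (kk i + 1), ?_, ?_⟩
    · intro j
      by_cases hj : j = i
      · subst hj; rw [Function.update_self]; omega
      · rw [Function.update_of_ne hj]; exact hle j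
    · rw [Finset.sum_update_of_mem (Finset.mem_univ i), ← Finset.erase_eq]
      have h2 := Finset.add_sum_erase Finset.univ kk (Finset.mem_univ i)
      omega

end GAux

lemma card_row_idx {d : ℕ} (n : Fin d → ℕ) (J : Finset (Fin d)) :
    Fintype.card (∀ μ : {μ : Fin d // μ ∈ J}, Fin (n μ.1)) = nS n J := by
  rw [Fintype.card_pi]
  simp only [Fintype.card_fin]
  rw [nS, ← Finset.prod_coe_sort J n]

lemma rank_mat_le {d : ℕ} (n : Fin d → ℕ) (X : Tensor d n) (J : Finset (Fin d)) :
    (mat n X J).rank ≤ nS n J := by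
  have := Matrix.rank_le_card_height (mat n X J)
  rwa [card_row_idx] at this

lemma gfun_zero_iff {d : ℕ} (n : Fin d → ℕ) (K : Finset (Finset (Fin d)))
    (X : Tensor d n) (s : ℕ) :
    gfun n K s X = 0 ↔ (∑ J ∈ K, (mat n X J).rank) < s := by
  have hsum_attach : ∑ J ∈ K, (mat n X J).rank = ∑ J : K, (mat n X (J : Finset (Fin d))).rank :=
    (Finset.sum_coe_sort K (fun J => (mat n X J).rank)).symm
  constructor
  · intro h0
    by_contra hc
    push_neg at hc
    -- construct a witness f making gfun positive
    obtain ⟨kk, hle, hsum⟩ := GAux.exists_sum_eq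
      (fun J : K => (mat n X (J : Finset (Fin d))).rank) s (by rw [hsum_attach] at hc; exact hc)
    have hfin : ∀ J : K, kk J < nS n (J : Finset (Fin d)) + 1 := by
      intro J
      have := (hle J).trans (rank_mat_le n X (J : Finset (Fin d)))
      omega
    set f : ∀ J : K, Fin (nS n (J : Finset (Fin d)) + 1) := fun J => ⟨kk J, hfin J⟩ with hfdef
    have hmem : f ∈ Finset.univ.filter
        (fun f : (∀ J : K, Fin (nS n (J : Finset (Fin d)) + 1)) =>
          (∑ J : K, ((f J : ℕ))) = s) := by
      simp only [Finset.mem_filter, Finset.mem_univ, true_and]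
      simpa [hfdef] using hsum
    have hpos : 0 < gfun n K s X := by
      rw [gfun]
      apply Finset.sum_pos'
      · intro g _
        exact Finset.prod_nonneg fun J _ => GAux.detSq_nonneg _ _
      · refine ⟨f, hmem, Finset.prod_pos fun J _ => ?_⟩
        exact GAux.detSq_pos (hle J)
    exact absurd h0 (ne_of_gt hpos)
  · intro hlt
    rw [gfun]
    apply Finset.sum_eq_zero
    intro f hf
    rw [Finset.mem_filter] at hf
    have hsumf : ∑ J : K, ((f J : ℕ)) = s := hf.2
    have hex : ∃ J : K, (mat n X (J : Finset (Fin d))).rank < (f J : ℕ) := by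
      by_contra hc
      push_neg at hc
      have : ∑ J : K, ((f J : ℕ)) ≤ ∑ J : K, (mat n X (J : Finset (Fin d))).rank :=
        Finset.sum_le_sum fun J _ => hc J
      rw [hsumf, ← hsum_attach] at this
      omega
    obtain ⟨J0, hJ0⟩ := hex
    exact Finset.prod_eq_zero (Finset.mem_univ J0) (GAux.detSq_eq_zero_of_rank_lt hJ0)


/-- `g_s(X) = 0 ↔ ∑_{J∈K} rank(X^{[J]}) < s`; in particular
`g_s(X) = 0` implies `g_{s+1}(X) = 0`. -/
theorem gfun_eq_zero_iff {d : ℕ} (n : Fin d → ℕ) (K : Finset (Finset (Fin d)))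
    (hK : ∀ J ∈ K, J.Nonempty ∧ J ≠ Finset.univ)
    (X : Tensor d n) (s : ℕ) (hs : s ≤ ∑ J ∈ K, nS n J) :
    (gfun n K s X = 0 ↔ (∑ J ∈ K, (mat n X J).rank) < s) ∧
    (gfun n K s X = 0 → gfun n K (s + 1) X = 0) := by
  constructor
  · exact gfun_zero_iff n K X s
  · intro h
    rw [gfun_zero_iff] at h ⊢
    omega

end
end

section
/- Let Y be a real n×r matrix with orthonormal columns (Yᵀ Y = I_r), Z a real r×m matrix, A := Y Z, and γ > 0. Then (A Aᵀ + γ I_n)⁻¹ = Y (Z Zᵀ + γ I_r)⁻¹ Yᵀ + γ⁻¹ (I_n − Y Yᵀ). In particular, for every matrix B whose column space is contained in the column space of Y, it holds that (A Aᵀ + γ I_n)⁻¹ B = Y (Z Zᵀ + γ I_r)⁻¹ Yᵀ B. -/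
open Matrix

/-- equivalent low-rank weights: if `Y` has orthonormal columns,
`A = Y Z` and `γ > 0`, then
`(A Aᵀ + γ I)⁻¹ = Y (Z Zᵀ + γ I)⁻¹ Yᵀ + γ⁻¹ (I − Y Yᵀ)`, and for every matrix `B`
whose column space is contained in the column space of `Y`,
`(A Aᵀ + γ I)⁻¹ B = Y (Z Zᵀ + γ I)⁻¹ Yᵀ B`. -/
theorem lowrank_weight_formula {n r m : ℕ} (Y : Matrix (Fin n) (Fin r) ℝ)
    (hY : Yᵀ * Y = 1) (Z : Matrix (Fin r) (Fin m) ℝ) (γ : ℝ) (hγ : 0 < γ) :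
    ((Y * Z) * (Y * Z)ᵀ + γ • (1 : Matrix (Fin n) (Fin n) ℝ))⁻¹
        = Y * (Z * Zᵀ + γ • (1 : Matrix (Fin r) (Fin r) ℝ))⁻¹ * Yᵀ
          + γ⁻¹ • ((1 : Matrix (Fin n) (Fin n) ℝ) - Y * Yᵀ) ∧
    ∀ (p : ℕ) (B : Matrix (Fin n) (Fin p) ℝ),
      LinearMap.range B.mulVecLin ≤ LinearMap.range Y.mulVecLin →
      ((Y * Z) * (Y * Z)ᵀ + γ • (1 : Matrix (Fin n) (Fin n) ℝ))⁻¹ * B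
        = Y * (Z * Zᵀ + γ • (1 : Matrix (Fin r) (Fin r) ℝ))⁻¹ * Yᵀ * B := by
  set S : Matrix (Fin r) (Fin r) ℝ := Z * Zᵀ + γ • 1 with hS
  have hSpd : S.PosDef := by
    apply Matrix.PosDef.posSemidef_add
    · have := Matrix.posSemidef_self_mul_conjTranspose Z
      simpa using this
    · rw [Matrix.smul_one_eq_diagonal]
      exact (Matrix.posDef_diagonal_iff).2 fun _ => hγ
  have hSu : IsUnit S.det := (Matrix.isUnit_iff_isUnit_det _).1 hSpd.isUnit
  have hS1 : S * S⁻¹ = 1 := Matrix.mul_nonsing_inv S hSu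
  have hYYY : Y * Yᵀ * Y = Y := by rw [Matrix.mul_assoc, hY, Matrix.mul_one]
  have key : ((Y * Z) * (Y * Z)ᵀ + γ • (1 : Matrix (Fin n) (Fin n) ℝ)) *
      (Y * S⁻¹ * Yᵀ + γ⁻¹ • ((1 : Matrix (Fin n) (Fin n) ℝ) - Y * Yᵀ)) = 1 := by
    have e1 : (Y * Z) * (Y * Z)ᵀ = Y * (Z * Zᵀ) * Yᵀ := by
      rw [Matrix.transpose_mul]; simp only [Matrix.mul_assoc]
    rw [e1]
    have h2 : Y * (Z * Zᵀ) * Yᵀ * (Y * S⁻¹ * Yᵀ) = Y * ((Z * Zᵀ) * S⁻¹) * Yᵀ := by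
      calc Y * (Z * Zᵀ) * Yᵀ * (Y * S⁻¹ * Yᵀ)
          = Y * (Z * Zᵀ) * (Yᵀ * Y) * S⁻¹ * Yᵀ := by simp only [Matrix.mul_assoc]
        _ = Y * ((Z * Zᵀ) * S⁻¹) * Yᵀ := by rw [hY, Matrix.mul_one]; simp only [Matrix.mul_assoc]
    have h3 : Y * (Z * Zᵀ) * Yᵀ * (γ⁻¹ • ((1 : Matrix (Fin n) (Fin n) ℝ) - Y * Yᵀ)) = 0 := by
      rw [Matrix.mul_smul, Matrix.mul_sub, Matrix.mul_one]
      have : Y * (Z * Zᵀ) * Yᵀ * (Y * Yᵀ) = Y * (Z * Zᵀ) * Yᵀ := by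
        calc Y * (Z * Zᵀ) * Yᵀ * (Y * Yᵀ) = Y * (Z * Zᵀ) * (Yᵀ * Y) * Yᵀ := by simp only [Matrix.mul_assoc]
          _ = Y * (Z * Zᵀ) * Yᵀ := by rw [hY, Matrix.mul_one]
      rw [this, sub_self, smul_zero]
    rw [Matrix.add_mul, Matrix.mul_add, Matrix.mul_add, h2, h3, add_zero,
      Matrix.smul_mul, Matrix.smul_mul, Matrix.one_mul, Matrix.one_mul, smul_smul,
      mul_inv_cancel₀ hγ.ne', one_smul]
    have h4 : Y * ((Z * Zᵀ) * S⁻¹) * Yᵀ + γ • (Y * S⁻¹ * Yᵀ) = Y * Yᵀ := by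
      have : Y * ((Z * Zᵀ) * S⁻¹) * Yᵀ + γ • (Y * S⁻¹ * Yᵀ) = Y * (S * S⁻¹) * Yᵀ := by
        rw [hS, Matrix.add_mul, Matrix.smul_mul, Matrix.one_mul]
        simp only [Matrix.mul_add, Matrix.add_mul, Matrix.mul_smul, Matrix.smul_mul,
          Matrix.mul_assoc]
      rw [this, hS1, Matrix.mul_one]
    rw [← add_assoc, h4]
    abel
  have hinv : ((Y * Z) * (Y * Z)ᵀ + γ • (1 : Matrix (Fin n) (Fin n) ℝ))⁻¹
      = Y * S⁻¹ * Yᵀ + γ⁻¹ • ((1 : Matrix (Fin n) (Fin n) ℝ) - Y * Yᵀ) :=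
    Matrix.inv_eq_right_inv key
  refine ⟨hinv, fun p B hB => ?_⟩
  have hproj : Y * Yᵀ * B = B := by
    ext i j
    have hcol : ∃ v, Y.mulVec v = B.mulVec (Pi.single j 1) :=
      hB ⟨Pi.single j 1, rfl⟩
    obtain ⟨v, hv⟩ := hcol
    have : ((Y * Yᵀ * B) *ᵥ Pi.single j 1) = B *ᵥ Pi.single j 1 := by
      rw [← Matrix.mulVec_mulVec, ← hv, Matrix.mulVec_mulVec, hYYY, hv]
    have h1 := congrFun this i
    simpa [Matrix.mulVec_single, mul_one] using h1
  rw [hinv, Matrix.add_mul, Matrix.smul_mul, Matrix.sub_mul, Matrix.one_mul, hproj,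
    sub_self, smul_zero, add_zero]
end
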